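/- arXiv:2201.13225 — 2 statements merged into one kernel-verified Lean document; each statement's English description precedes it below -/
import Mathlib

section
/- Let n ≥ 1 and let x, a, b : Fin n → ℂ (or a commutative ring/field). Then the determinant of the n×n matrix M with M i i = x i and M i j = a i * b j for i ≠ j equals (∏ k, (x k - a k * b k)) + ∑ k, a k * b k * ∏ l ≠ k, (x l - a l * b l). -/
open Matrix Finset

lemma det_updateRow_diagonal {m : ℕ} (d : Fin m → ℂ) (k : Fin m) (v : Fin m → ℂ) :
    ((Matrix.diagonal d).updateRow k v).det =
      v k * ∏ l ∈ Finset.univ.erase k, d l := by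
  rw [Matrix.det_apply]
  rw [Finset.sum_eq_single_of_mem (1 : Equiv.Perm (Fin m)) (Finset.mem_univ _)]
  · rw [Equiv.Perm.sign_one, one_smul]
    rw [← Finset.mul_prod_erase Finset.univ _ (Finset.mem_univ k)]
    simp only [Equiv.Perm.one_apply, Matrix.updateRow_self]
    congr 1
    refine Finset.prod_congr rfl fun i hi => ?_
    rw [Matrix.updateRow_ne (Finset.ne_of_mem_erase hi), Matrix.diagonal_apply_eq]
  · intro σ _ hσ
    have hex : ∃ j, σ j ≠ j := by
      by_contra h
      push_neg at h
      exact hσ (Equiv.ext h)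
    obtain ⟨j, hj⟩ := hex
    by_cases hjk : σ j = k
    · have hk : σ k ≠ k := fun h => hj (σ.injective (hjk.trans h.symm) ▸ hjk)
      have : ((Matrix.diagonal d).updateRow k v) (σ k) k = 0 := by
        rw [Matrix.updateRow_ne hk, Matrix.diagonal_apply_ne _ hk]
      exact smul_eq_zero_of_right _ (Finset.prod_eq_zero (f := fun i => ((Matrix.diagonal d).updateRow k v) (σ i) i) (Finset.mem_univ k) this)
    · have : ((Matrix.diagonal d).updateRow k v) (σ j) j = 0 := by
        rw [Matrix.updateRow_ne hjk, Matrix.diagonal_apply_ne _ hj]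
      exact smul_eq_zero_of_right _ (Finset.prod_eq_zero (f := fun i => ((Matrix.diagonal d).updateRow k v) (σ i) i) (Finset.mem_univ j) this)

theorem stmt_0 (n : ℕ) (hn : 1 ≤ n) (x a b : Fin n → ℂ)
    (M : Matrix (Fin n) (Fin n) ℂ)
    (hM : ∀ i j, M i j = if i = j then x i else a i * b j) :
    M.det = (∏ k, (x k - a k * b k)) +
      ∑ k, a k * b k * ∏ l ∈ Finset.univ.erase k, (x l - a l * b l) := by
  set d : Fin n → ℂ := fun k => x k - a k * b k with hd
  have hMrows : (M : Fin n → Fin n → ℂ) =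
      (fun i => a i • b) + (fun i => Matrix.diagonal d i) := by
    funext i j
    by_cases h : i = j
    · subst h
      simp [hM, d, Pi.smul_apply, smul_eq_mul]
    · simp [hM, h, Matrix.diagonal_apply_ne _ h, Pi.smul_apply, smul_eq_mul]
  have hdet : M.det = Matrix.detRowAlternating
      ((fun i : Fin n => a i • b) + (fun i => Matrix.diagonal d i)) := by
    rw [← hMrows]; rfl
  set f : Finset (Fin n) → ℂ := fun s => Matrix.detRowAlternating
    (s.piecewise (fun i : Fin n => a i • b) (fun i => Matrix.diagonal d i)) with hf
  have hsum : M.det = ∑ s : Finset (Fin n), f s := by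
    rw [hdet]
    exact (Matrix.detRowAlternating.toMultilinearMap).map_add_univ _ _
  -- f of empty set
  have hempty : f ∅ = ∏ k, d k := by
    rw [hf]
    simp only [Finset.piecewise_empty]
    have : (fun i : Fin n => Matrix.diagonal d i) = Matrix.diagonal d := rfl
    rw [this]
    exact Matrix.det_diagonal
  -- f of singletons
  have hsingle : ∀ k, f {k} = a k * b k * ∏ l ∈ Finset.univ.erase k, d l := by
    intro k
    rw [hf]
    simp only [Finset.piecewise_singleton]
    have : (Function.update (fun i : Fin n => Matrix.diagonal d i) k (a k • b)) =
        (Matrix.diagonal d).updateRow k (a k • b) := rfl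
    rw [this]
    show ((Matrix.diagonal d).updateRow k (a k • b)).det = _
    rw [det_updateRow_diagonal]
    simp [smul_eq_mul, mul_assoc]
  -- f vanishes on sets of card ≥ 2
  have hzero : ∀ s : Finset (Fin n), 1 < s.card → f s = 0 := by
    intro s hs
    obtain ⟨i, hi, j, hj, hij⟩ := Finset.one_lt_card.mp hs
    rw [hf]
    show Matrix.detRowAlternating
      (s.piecewise (fun i : Fin n => a i • b) (fun i => Matrix.diagonal d i)) = 0
    set m := s.piecewise (fun i : Fin n => a i • b) (fun i => Matrix.diagonal d i) with hm
    have hmi : m i = a i • b := by rw [hm]; simp [Finset.piecewise_eq_of_mem _ _ _ hi]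
    have hmj : m j = a j • b := by rw [hm]; simp [Finset.piecewise_eq_of_mem _ _ _ hj]
    have h1 : m = Function.update m i (a i • b) := by
      rw [← hmi, Function.update_eq_self]
    rw [h1, Matrix.detRowAlternating.map_update_smul m i (a i) b]
    have hmj' : Function.update m i b j = a j • b := by
      rw [Function.update_of_ne hij.symm, hmj]
    have h2 : Function.update m i b =
        Function.update (Function.update m i b) j (a j • b) := by
      rw [← hmj', Function.update_eq_self]
    rw [h2, Matrix.detRowAlternating.map_update_smul _ j (a j) b]
    rw [Matrix.detRowAlternating.map_eq_zero_of_eq _ (i := i) (j := j) ?_ hij]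
    · simp
    · rw [Function.update_of_ne hij, Function.update_self, Function.update_self]
  -- sum over all finsets reduces
  have hT : M.det = f ∅ + ∑ k, f {k} := by
    rw [hsum]
    have hsub : insert (∅ : Finset (Fin n)) (Finset.univ.image fun k => ({k} : Finset (Fin n)))
        ⊆ Finset.univ := Finset.subset_univ _
    rw [← Finset.sum_subset hsub]
    · rw [Finset.sum_insert]
      · congr 1
        rw [Finset.sum_image]
        intro x _ y _ h
        exact Finset.singleton_injective h
      · simp only [Finset.mem_image, Finset.mem_univ, true_and]
        rintro ⟨k, hk⟩
        exact Finset.singleton_ne_empty k hk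
    · intro s _ hs
      apply hzero
      rcases Nat.lt_or_ge 1 s.card with h | h
      · exact h
      · exfalso
        interval_cases h' : s.card
        · exact hs (by simp [Finset.card_eq_zero.mp h'])
        · obtain ⟨k, rfl⟩ := Finset.card_eq_one.mp h'
          exact hs (by simp)
  rw [hT, hempty]
  congr 1
  exact Finset.sum_congr rfl fun k _ => (hsingle k)
end

section
/- Let n ≥ 1 and x, a, b : Fin n → ℂ with x k ≠ a k * b k for all k. Then det M = (∏ k, (x k - a k * b k)) * (1 + ∑ k, a k * b k / (x k - a k * b k)), where M i i = x i and M i j = a i * b j for i ≠ j. -/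
open Matrix

theorem stmt_1 (n : ℕ) (hn : 1 ≤ n) (x a b : Fin n → ℂ)
    (h : ∀ k, x k ≠ a k * b k)
    (M : Matrix (Fin n) (Fin n) ℂ)
    (hM : ∀ i j, M i j = if i = j then x i else a i * b j) :
    M.det = (∏ k, (x k - a k * b k)) *
      (1 + ∑ k, a k * b k / (x k - a k * b k)) := by
  set D : Matrix (Fin n) (Fin n) ℂ := Matrix.diagonal (fun k => x k - a k * b k) with hD
  have hdet : D.det = ∏ k, (x k - a k * b k) := by simp [hD, Matrix.det_diagonal]
  have hunit : IsUnit D.det := by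
    rw [hdet]
    exact isUnit_iff_ne_zero.2 (Finset.prod_ne_zero_iff.2 fun k _ => sub_ne_zero.2 (h k))
  have hMeq : M = D + replicateCol (Fin 1) a * replicateRow (Fin 1) b := by
    ext i j
    by_cases hij : i = j <;>
      simp [hM, hD, Matrix.diagonal, hij, Matrix.mul_apply, Matrix.replicateCol, Matrix.replicateRow]
  rw [hMeq, Matrix.det_add_mul (replicateCol (Fin 1) a) (replicateRow (Fin 1) b) hunit, hdet]
  congr 1
  have hDinv : D⁻¹ = Matrix.diagonal (fun k => (x k - a k * b k)⁻¹) := by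
    apply Matrix.inv_eq_right_inv
    rw [hD, Matrix.diagonal_mul_diagonal]
    ext i j
    rcases eq_or_ne i j with rfl | hij
    · simp [mul_inv_cancel₀ (sub_ne_zero.2 (h i))]
    · simp [hij]
  rw [hDinv]
  rw [Matrix.det_fin_one]
  simp [Matrix.mul_apply, Matrix.replicateRow, Matrix.replicateCol, Matrix.diagonal, Finset.mul_sum,
    div_eq_mul_inv]
  apply Finset.sum_congr rfl
  intro k _
  ring
end
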